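/- Let f: M → ℝ be a smooth function on a smooth manifold and let N ⊂ M be an embedded submanifold of codimension 1. If p ∈ N is a nondegenerate critical point of both f and f|_N, then the Morse index of f at p equals either the Morse index of f|_N at p or that index plus 1. -/

import Mathlib

/-!
In charts, `f ∘ ι` is `f` composed with the chart expression of `ι`. At a critical point of `f`
the second-order chain rule loses its term `Df ∘ D²ι`, so the Hessian of `f ∘ ι` is the pullback
of the Hessian of `f` along the injective differential `dι`. Pulling a quadratic form back along
a linear map cannot raise its negative index, and pulling it back along an injective map onto a
hyperplane lowers it by at most one: a negative definite subspace meets the hyperplane in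
codimension at most one.
-/

open Real Manifold

/-- The Hessian bilinear form of `f : M → ℝ` at `p`, computed in the preferred chart. -/
noncomputable def mHessian (m : ℕ) {M : Type*} [TopologicalSpace M]
    [ChartedSpace (EuclideanSpace ℝ (Fin m)) M] (f : M → ℝ) (p : M)
    (v w : EuclideanSpace ℝ (Fin m)) : ℝ :=
  iteratedFDeriv ℝ 2 (f ∘ (extChartAt (𝓡 m) p).symm) (extChartAt (𝓡 m) p p) ![v, w]

/-- Nondegeneracy of the Hessian of `f` at `p`. -/
def MNondegenerate (m : ℕ) {M : Type*} [TopologicalSpace M]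
    [ChartedSpace (EuclideanSpace ℝ (Fin m)) M] (f : M → ℝ) (p : M) : Prop :=
  ∀ v : EuclideanSpace ℝ (Fin m), v ≠ 0 → ∃ w, mHessian m f p v w ≠ 0

/-- The Morse index of `f` at `p`: the maximal dimension of a subspace on which the
Hessian is negative definite. -/
noncomputable def morseIndex (m : ℕ) {M : Type*} [TopologicalSpace M]
    [ChartedSpace (EuclideanSpace ℝ (Fin m)) M] (f : M → ℝ) (p : M) : ℕ :=
  sSup {k | ∃ U : Submodule ℝ (EuclideanSpace ℝ (Fin m)),
    Module.finrank ℝ U = k ∧ ∀ v ∈ U, v ≠ 0 → mHessian m f p v v < 0}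

open Topology Module

lemma QuadraticMap.neg_comp {R V W N : Type*} [CommRing R] [AddCommGroup V] [Module R V]
    [AddCommGroup W] [Module R W] [AddCommGroup N] [Module R N] (Q : QuadraticMap R V N)
    (L : W →ₗ[R] V) : (-Q).comp L = -(Q.comp L) := by
  ext
  simp

section Signature

variable {K V W : Type*} [Field K] [LinearOrder K] [AddCommGroup V] [Module K V]
  [AddCommGroup W] [Module K W] [FiniteDimensional K V] [FiniteDimensional K W]
  (Q : QuadraticForm K V) (L : W →ₗ[K] V)

lemma sigPos_comp_le : sigPos (Q.comp L) ≤ sigPos Q := by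
  obtain ⟨U, hU, hpos⟩ := exists_finrank_eq_sigPos_and_posDef (Q.comp L)
  have hinj : Function.Injective (L.domRestrict U) := by
    rw [← LinearMap.ker_eq_bot, LinearMap.ker_eq_bot']
    intro u hu
    have hLu : L u = 0 := hu
    by_contra hu0
    simpa [hLu] using hpos u hu0
  rw [← hU, ← LinearMap.finrank_range_of_inj hinj, LinearMap.range_domRestrict]
  refine le_sigPos_of_posDef Q ?_
  rintro ⟨_, u, hu, rfl⟩ hu0
  exact hpos ⟨u, hu⟩ fun h => hu0 (by simp_all)

lemma sigPos_le_sigPos_comp_add (hL : Function.Injective L) :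
    sigPos Q ≤ sigPos (Q.comp L) + (finrank K V - finrank K W) := by
  obtain ⟨U, hU, hpos⟩ := exists_finrank_eq_sigPos_and_posDef Q
  have hcodim : finrank K U ≤ finrank K (U.comap L) + (finrank K V - finrank K W) := by
    have hcomap : finrank K (U.comap L) = finrank K ↥(LinearMap.range L ⊓ U) := by
      rw [← Submodule.map_comap_eq]
      exact (Submodule.equivMapOfInjective L hL _).finrank_eq
    have hdim := Submodule.finrank_sup_add_finrank_inf_eq (LinearMap.range L) U
    have hsup := Submodule.finrank_le (LinearMap.range L ⊔ U)
    have hrange := LinearMap.finrank_range_of_inj hL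
    omega
  have hcomap_pos : finrank K (U.comap L) ≤ sigPos (Q.comp L) := by
    refine le_sigPos_of_posDef _ fun w hw0 => hpos ⟨L w, w.2⟩ ?_
    simpa using fun h => hw0 (Subtype.ext (hL (h.trans L.map_zero.symm)))
  omega

lemma sigNeg_comp_le : sigNeg (Q.comp L) ≤ sigNeg Q := by
  rw [← sigPos_neg, ← sigPos_neg, ← QuadraticMap.neg_comp]
  exact sigPos_comp_le _ _

lemma sigNeg_le_sigNeg_comp_add (hL : Function.Injective L) :
    sigNeg Q ≤ sigNeg (Q.comp L) + (finrank K V - finrank K W) := by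
  rw [← sigPos_neg, ← sigPos_neg, ← QuadraticMap.neg_comp]
  exact sigPos_le_sigPos_comp_add _ _ hL

end Signature

section Hessian

variable {𝕜 E F G : Type*} [NontriviallyNormedField 𝕜] [NormedAddCommGroup E] [NormedSpace 𝕜 E]
  [NormedAddCommGroup F] [NormedSpace 𝕜 F] [NormedAddCommGroup G] [NormedSpace 𝕜 G]

variable (𝕜) in
noncomputable def hessian (g : E → G) (x : E) : QuadraticMap 𝕜 E G :=
  LinearMap.BilinMap.toQuadraticMap (fderiv 𝕜 (fderiv 𝕜 g) x).toLinearMap₁₂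

lemma hessian_apply (g : E → G) (x v : E) :
    hessian 𝕜 g x v = iteratedFDeriv 𝕜 2 g x ![v, v] := by
  simp [hessian, iteratedFDeriv_two_apply]

lemma Filter.EventuallyEq.hessian_eq {g₁ g₂ : E → G} {x : E} (h : g₁ =ᶠ[𝓝 x] g₂) :
    hessian 𝕜 g₁ x = hessian 𝕜 g₂ x := by
  rw [hessian, hessian, h.fderiv.fderiv_eq]

lemma hessian_comp_of_fderiv_eq_zero {g : F → G} {h : E → F} {x : E}
    (hg : ContDiffAt 𝕜 2 g (h x)) (hh : ContDiffAt 𝕜 2 h x) (hcrit : fderiv 𝕜 g (h x) = 0) :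
    hessian 𝕜 (g ∘ h) x = (hessian 𝕜 g (h x)).comp (fderiv 𝕜 h x) := by
  have hdg : DifferentiableAt 𝕜 (fderiv 𝕜 g) (h x) :=
    (hg.fderiv_right (m := 1) le_rfl).differentiableAt one_ne_zero
  have hdh : DifferentiableAt 𝕜 (fderiv 𝕜 h) x :=
    (hh.fderiv_right (m := 1) le_rfl).differentiableAt one_ne_zero
  have hdgh : DifferentiableAt 𝕜 (fun y => fderiv 𝕜 g (h y)) x :=
    hdg.comp x (hh.differentiableAt two_ne_zero)
  have hchain : fderiv 𝕜 (g ∘ h) =ᶠ[𝓝 x] fun y => (fderiv 𝕜 g (h y)).comp (fderiv 𝕜 h y) := by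
    filter_upwards [hh.continuousAt.eventually (hg.eventually (by simp)), hh.eventually (by simp)]
      with y hgy hhy
    exact fderiv_comp y (hgy.differentiableAt two_ne_zero) (hhy.differentiableAt two_ne_zero)
  ext v
  rw [hessian, hessian, hchain.fderiv_eq, fderiv_clm_comp hdgh hdh,
    fderiv_fun_comp x hdg (hh.differentiableAt two_ne_zero)]
  simp [hcrit]

end Hessian

section Charts

variable {E H M E' H' M' : Type*} [NormedAddCommGroup E] [NormedSpace ℝ E] [TopologicalSpace H]
  {I : ModelWithCorners ℝ E H} [TopologicalSpace M] [ChartedSpace H M]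
  [NormedAddCommGroup E'] [NormedSpace ℝ E'] [TopologicalSpace H']
  {I' : ModelWithCorners ℝ E' H'} [TopologicalSpace M'] [ChartedSpace H' M']

lemma writtenInExtChartAt_real (f : M → ℝ) (x : M) :
    writtenInExtChartAt I 𝓘(ℝ, ℝ) x f = f ∘ (extChartAt I x).symm := by
  simp [writtenInExtChartAt, chartAt_self_eq]

variable [I.Boundaryless]

lemma ContMDiffAt.contDiffAt_writtenInExtChartAt {n : WithTop ℕ∞} {f : M → M'} {x : M}
    (hf : ContMDiffAt I I' n f x) :
    ContDiffAt ℝ n (writtenInExtChartAt I I' x f) (extChartAt I x x) := by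
  simpa [I.range_eq_univ, contDiffWithinAt_univ] using (contMDiffAt_iff.mp hf).2

lemma MDifferentiableAt.mfderiv_eq_fderiv_writtenInExtChartAt {f : M → M'} {x : M}
    (hf : MDifferentiableAt I I' f x) :
    mfderiv I I' f x = fderiv ℝ (writtenInExtChartAt I I' x f) (extChartAt I x x) := by
  rw [hf.mfderiv, I.range_eq_univ, fderivWithin_univ]

lemma hessian_comp_extChartAt_symm_of_mfderiv_eq_zero [I'.Boundaryless] {f : M' → ℝ}
    {ι : M → M'} {q : M} (hf : ContMDiffAt I' 𝓘(ℝ, ℝ) 2 f (ι q)) (hι : ContMDiffAt I I' 2 ι q)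
    (hcrit : mfderiv I' 𝓘(ℝ, ℝ) f (ι q) = 0) :
    hessian ℝ ((f ∘ ι) ∘ (extChartAt I q).symm) (extChartAt I q q) =
      (hessian ℝ (f ∘ (extChartAt I' (ι q)).symm) (extChartAt I' (ι q) (ι q))).comp
        (mfderiv I I' ι q).toLinearMap := by
  have hbase : writtenInExtChartAt I I' q ι (extChartAt I q q) = extChartAt I' (ι q) (ι q) := by
    simp [writtenInExtChartAt]
  have hloc : writtenInExtChartAt I 𝓘(ℝ, ℝ) q (f ∘ ι) =ᶠ[𝓝 (extChartAt I q q)]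
      writtenInExtChartAt I' 𝓘(ℝ, ℝ) (ι q) f ∘ writtenInExtChartAt I I' q ι := by
    simpa [I.range_eq_univ] using
      writtenInExtChartAt_comp (I := I) (I' := I') (I'' := 𝓘(ℝ, ℝ)) (g := f) (s := Set.univ)
        hι.continuousAt.continuousWithinAt
  have hf' : ContDiffAt ℝ 2 (writtenInExtChartAt I' 𝓘(ℝ, ℝ) (ι q) f)
      (writtenInExtChartAt I I' q ι (extChartAt I q q)) :=
    hbase ▸ hf.contDiffAt_writtenInExtChartAt
  have hcrit' : fderiv ℝ (writtenInExtChartAt I' 𝓘(ℝ, ℝ) (ι q) f)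
      (writtenInExtChartAt I I' q ι (extChartAt I q q)) = 0 := by
    rw [hbase, ← (hf.mdifferentiableAt two_ne_zero).mfderiv_eq_fderiv_writtenInExtChartAt]
    exact hcrit
  rw [← writtenInExtChartAt_real, ← writtenInExtChartAt_real, hloc.hessian_eq,
    hessian_comp_of_fderiv_eq_zero hf' hι.contDiffAt_writtenInExtChartAt hcrit', hbase,
    (hι.mdifferentiableAt two_ne_zero).mfderiv_eq_fderiv_writtenInExtChartAt]
  rfl

end Charts

lemma morseIndex_eq_sigNeg (m : ℕ) {M : Type*} [TopologicalSpace M]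
    [ChartedSpace (EuclideanSpace ℝ (Fin m)) M] (f : M → ℝ) (p : M) :
    morseIndex m f p =
      sigNeg (hessian ℝ (f ∘ (extChartAt (𝓡 m) p).symm) (extChartAt (𝓡 m) p p)) := by
  rw [← (sigNeg_isGreatest _).csSup_eq, morseIndex]
  congr! 4 with k U
  simp [QuadraticMap.PosDef, mHessian, hessian_apply]

theorem morse_index_restriction_codim_one_general
    (m : ℕ) {M : Type*} [TopologicalSpace M] [ChartedSpace (EuclideanSpace ℝ (Fin m)) M]
    {N : Type*} [TopologicalSpace N] [ChartedSpace (EuclideanSpace ℝ (Fin (m - 1))) N]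
    (f : M → ℝ) (hf : ContMDiff (𝓡 m) 𝓘(ℝ, ℝ) (⊤ : ℕ∞) f)
    (ι : N → M) (hι : ContMDiff (𝓡 (m - 1)) (𝓡 m) (⊤ : ℕ∞) ι)
    (himm : ∀ q : N, Function.Injective (mfderiv (𝓡 (m - 1)) (𝓡 m) ι q))
    (q : N) (p : M) (hpq : ι q = p)
    (hcrit : mfderiv (𝓡 m) 𝓘(ℝ, ℝ) f p = 0) :
    morseIndex m f p = morseIndex (m - 1) (f ∘ ι) q ∨
    morseIndex m f p = morseIndex (m - 1) (f ∘ ι) q + 1 := by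
  subst hpq
  rw [morseIndex_eq_sigNeg, morseIndex_eq_sigNeg]
  set Q := hessian ℝ (f ∘ (extChartAt (𝓡 m) (ι q)).symm) (extChartAt (𝓡 m) (ι q) (ι q))
  let L : EuclideanSpace ℝ (Fin (m - 1)) →ₗ[ℝ] EuclideanSpace ℝ (Fin m) :=
    (mfderiv (𝓡 (m - 1)) (𝓡 m) ι q).toLinearMap
  have hcomp : hessian ℝ ((f ∘ ι) ∘ (extChartAt (𝓡 (m - 1)) q).symm)
      (extChartAt (𝓡 (m - 1)) q q) = Q.comp L :=
    hessian_comp_extChartAt_symm_of_mfderiv_eq_zero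
      ((hf (ι q)).of_le (by norm_cast)) ((hι q).of_le (by norm_cast)) hcrit
  have hle := sigNeg_comp_le Q L
  have hge := sigNeg_le_sigNeg_comp_add Q L (himm q)
  rw [finrank_euclideanSpace_fin, finrank_euclideanSpace_fin] at hge
  rw [hcomp]
  omega

/-- If `p` is a nondegenerate critical point of both `f` and its restriction to an embedded
codimension-one submanifold (given by a smooth embedding `ι : N → M`), then the Morse index
of `f` at `p` equals the Morse index of the restriction, or that index plus one. -/
theorem morse_index_restriction_codim_one
    (m : ℕ) (hm : 1 ≤ m)
    {M : Type*} [TopologicalSpace M] [ChartedSpace (EuclideanSpace ℝ (Fin m)) M]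
    [IsManifold (𝓡 m) (⊤ : ℕ∞) M]
    {N : Type*} [TopologicalSpace N] [ChartedSpace (EuclideanSpace ℝ (Fin (m - 1))) N]
    [IsManifold (𝓡 (m - 1)) (⊤ : ℕ∞) N]
    (f : M → ℝ) (hf : ContMDiff (𝓡 m) 𝓘(ℝ, ℝ) (⊤ : ℕ∞) f)
    (ι : N → M) (hι : ContMDiff (𝓡 (m - 1)) (𝓡 m) (⊤ : ℕ∞) ι)
    (hemb : Topology.IsEmbedding ι)
    (himm : ∀ q : N, Function.Injective (mfderiv (𝓡 (m - 1)) (𝓡 m) ι q))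
    (q : N) (p : M) (hpq : ι q = p)
    (hcrit : mfderiv (𝓡 m) 𝓘(ℝ, ℝ) f p = 0)
    (hcritN : mfderiv (𝓡 (m - 1)) 𝓘(ℝ, ℝ) (f ∘ ι) q = 0)
    (hnd : MNondegenerate m f p) (hndN : MNondegenerate (m - 1) (f ∘ ι) q) :
    morseIndex m f p = morseIndex (m - 1) (f ∘ ι) q ∨
    morseIndex m f p = morseIndex (m - 1) (f ∘ ι) q + 1 :=
  morse_index_restriction_codim_one_general m f hf ι hι himm q p hpq hcrit
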